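/- Let γ > 0 be real, let L_0 be the ℂ-linear endomorphism of the space of 3×3 complex matrices given by L_0(ρ) := γ·(E_{02} ρ E_{20} − (1/2)(E_{22} ρ + ρ E_{22})), and let P be the ℂ-linear endomorphism given by P(ρ) := (ρ_{00}+ρ_{22}) E_{00} + ρ_{01} E_{01} + ρ_{10} E_{10} + ρ_{11} E_{11}. Then exp(t L_0) converges to P in operator norm as t → +∞. -/

import Mathlib

open Filter

attribute [local instance] Matrix.linftyOpNormedAddCommGroup Matrix.linftyOpNormedSpace

/-- The standard matrix unit `E_{ij}` (a `1` in row `i`, column `j`). -/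
noncomputable def matUnit (i j : Fin 3) : Matrix (Fin 3) (Fin 3) ℂ :=
  Matrix.single i j 1

theorem matCLM_isTopologicalRing :
    IsTopologicalRing (Matrix (Fin 3) (Fin 3) ℂ →L[ℂ] Matrix (Fin 3) (Fin 3) ℂ) :=
  @NonUnitalSeminormedRing.toIsTopologicalRing _ (@ContinuousLinearMap.toNormedRing ℂ
    (Matrix (Fin 3) (Fin 3) ℂ) _ _ _).toNonUnitalNormedRing.toNonUnitalSeminormedRing

attribute [local instance] matCLM_isTopologicalRing

/-!
The generator is diagonalisable with real spectrum `{0, -γ/2, -γ}`: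
`L₀ = -(γ/2) Q - γ R`, where `Q` keeps the coherences `ρ₀₂, ρ₁₂, ρ₂₀, ρ₂₁` and
`R ρ = ρ₂₂ (E₂₂ - E₀₀)` moves the excited population, and `Q`, `R` are orthogonal idempotents
with `P = 1 - Q - R`. A family of complete orthogonal idempotents `eᵢ` gives an algebra
homomorphism `v ↦ ∑ vᵢ eᵢ` out of `ι → ℂ`, and exponentials commute with it, so
`exp (t L₀) = P + e^{-γt/2} Q + e^{-γt} R`, which tends to `P`.
-/

open Topology

namespace CompleteOrthogonalIdempotents

variable {R A ι : Type*} [CommSemiring R] [Semiring A] [Algebra R A] [Fintype ι] {e : ι → A}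

noncomputable def sumSMulAlgHom (he : CompleteOrthogonalIdempotents e) : (ι → R) →ₐ[R] A :=
  AlgHom.ofLinearMap (Fintype.linearCombination R e)
    (by simp [Fintype.linearCombination_apply, he.complete])
    (fun v w => by
      classical
      simp [Fintype.linearCombination_apply, Finset.sum_mul, Finset.mul_sum, he.mul_eq, smul_smul,
        mul_comm])

lemma sumSMulAlgHom_apply (he : CompleteOrthogonalIdempotents e) (v : ι → R) :
    he.sumSMulAlgHom v = ∑ i, v i • e i :=
  Fintype.linearCombination_apply R e v

end CompleteOrthogonalIdempotents

section Exponential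

variable {𝔸 ι : Type*} [NormedRing 𝔸] [NormedAlgebra ℂ 𝔸] [Fintype ι] {e : ι → 𝔸}

theorem CompleteOrthogonalIdempotents.exp_sum_smul (he : CompleteOrthogonalIdempotents e)
    (v : ι → ℂ) : NormedSpace.exp (∑ i, v i • e i) = ∑ i, Complex.exp (v i) • e i := by
  let : NormedAlgebra ℚ 𝔸 := .restrictScalars ℚ ℂ 𝔸
  have hcont : Continuous (he.sumSMulAlgHom (R := ℂ)) :=
    LinearMap.continuous_of_finiteDimensional (he.sumSMulAlgHom (R := ℂ)).toLinearMap
  rw [← he.sumSMulAlgHom_apply, ← NormedSpace.map_exp _ hcont, Pi.exp_def, he.sumSMulAlgHom_apply]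
  simp [Complex.exp_eq_exp_ℂ]

theorem OrthogonalIdempotents.exp_sum_smul (he : OrthogonalIdempotents e) (v : ι → ℂ) :
    NormedSpace.exp (∑ i, v i • e i) = (1 - ∑ i, e i) + ∑ i, Complex.exp (v i) • e i := by
  simpa [Fintype.sum_option] using
    (CompleteOrthogonalIdempotents.option he).exp_sum_smul (Option.elim · 0 v)

theorem OrthogonalIdempotents.tendsto_exp_smul_sum_smul (he : OrthogonalIdempotents e)
    {v : ι → ℂ} (hv : ∀ i, (v i).re < 0) :
    Tendsto (fun t : ℝ => NormedSpace.exp ((t : ℂ) • ∑ i, v i • e i)) atTop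
      (𝓝 (1 - ∑ i, e i)) := by
  have hdecay : ∀ i, Tendsto (fun t : ℝ => Complex.exp (t * v i)) atTop (𝓝 0) := fun i => by
    rw [Complex.tendsto_exp_nhds_zero_iff]
    simpa using tendsto_id.atTop_mul_const_of_neg (hv i)
  simp_rw [Finset.smul_sum, smul_smul, he.exp_sum_smul]
  simpa using tendsto_const_nhds.add (tendsto_finsetSum _ fun i _ => (hdecay i).smul_const (e i))

end Exponential

section ThreeLevel

local notation "𝕄" => Matrix (Fin 3) (Fin 3) ℂ

noncomputable def coherenceProj : 𝕄 →L[ℂ] 𝕄 :=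
  LinearMap.toContinuousLinearMap
  { toFun := fun ρ => ρ 0 2 • matUnit 0 2 + ρ 1 2 • matUnit 1 2 +
      ρ 2 0 • matUnit 2 0 + ρ 2 1 • matUnit 2 1
    map_add' := fun ρ σ => by simp only [Matrix.add_apply, add_smul]; abel
    map_smul' := fun c ρ => by simp [Matrix.smul_apply, smul_smul, smul_add] }

noncomputable def populationProj : 𝕄 →L[ℂ] 𝕄 :=
  LinearMap.toContinuousLinearMap
  { toFun := fun ρ => ρ 2 2 • (matUnit 2 2 - matUnit 0 0)
    map_add' := fun ρ σ => by simp [Matrix.add_apply, add_smul]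
    map_smul' := fun c ρ => by simp [Matrix.smul_apply, smul_smul] }

lemma coherenceProj_apply (ρ : 𝕄) :
    coherenceProj ρ = ρ 0 2 • matUnit 0 2 + ρ 1 2 • matUnit 1 2 +
      ρ 2 0 • matUnit 2 0 + ρ 2 1 • matUnit 2 1 := rfl

lemma populationProj_apply (ρ : 𝕄) :
    populationProj ρ = ρ 2 2 • (matUnit 2 2 - matUnit 0 0) := rfl

lemma orthogonalIdempotents_coherenceProj_populationProj :
    OrthogonalIdempotents ![coherenceProj, populationProj] := by
  rw [OrthogonalIdempotents.iff_mul_eq]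
  intro i j
  fin_cases i <;> fin_cases j <;> ext ρ a b <;> fin_cases a <;> fin_cases b <;>
    simp [coherenceProj_apply, populationProj_apply, matUnit, Matrix.single]

lemma eq_sum_smul_coherenceProj_populationProj {γ : ℝ} {L₀ : 𝕄 →L[ℂ] 𝕄}
    (hL₀ : ∀ ρ, L₀ ρ = (γ : ℂ) •
      (matUnit 0 2 * ρ * matUnit 2 0 - (1 / 2 : ℂ) • (matUnit 2 2 * ρ + ρ * matUnit 2 2))) :
    L₀ = ∑ i, ![-(γ : ℂ) / 2, -(γ : ℂ)] i • ![coherenceProj, populationProj] i := by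
  ext ρ a b
  fin_cases a <;> fin_cases b <;>
    simp [hL₀, coherenceProj_apply, populationProj_apply, matUnit, Matrix.mul_apply,
      Matrix.single] <;> ring

lemma eq_one_sub_sum_coherenceProj_populationProj {P : 𝕄 →L[ℂ] 𝕄}
    (hP : ∀ ρ, P ρ = (ρ 0 0 + ρ 2 2) • matUnit 0 0 + ρ 0 1 • matUnit 0 1 +
      ρ 1 0 • matUnit 1 0 + ρ 1 1 • matUnit 1 1) :
    P = 1 - ∑ i, ![coherenceProj, populationProj] i := by
  ext ρ a b
  fin_cases a <;> fin_cases b <;>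
    simp [hP, coherenceProj_apply, populationProj_apply, matUnit, Matrix.single]

end ThreeLevel

/-- for `γ > 0`, the semigroup `exp(t L_0)` generated by
`L_0(ρ) = γ (E_{02} ρ E_{20} - ½(E_{22} ρ + ρ E_{22}))` converges in operator norm, as
`t → +∞`, to the projector
`P(ρ) = (ρ_{00}+ρ_{22}) E_{00} + ρ_{01} E_{01} + ρ_{10} E_{10} + ρ_{11} E_{11}`. -/
theorem stmt14 (γ : ℝ) (hγ : 0 < γ)
    (L₀ P : Matrix (Fin 3) (Fin 3) ℂ →L[ℂ] Matrix (Fin 3) (Fin 3) ℂ)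
    (hL₀ : ∀ ρ, L₀ ρ = (γ : ℂ) •
      (matUnit 0 2 * ρ * matUnit 2 0 -
        (1 / 2 : ℂ) • (matUnit 2 2 * ρ + ρ * matUnit 2 2)))
    (hP : ∀ ρ, P ρ = (ρ 0 0 + ρ 2 2) • matUnit 0 0 + ρ 0 1 • matUnit 0 1 +
      ρ 1 0 • matUnit 1 0 + ρ 1 1 • matUnit 1 1) :
    Tendsto (fun t : ℝ => NormedSpace.exp (t • L₀)) atTop (nhds P) := by
  have hrates : ∀ i, (![-(γ : ℂ) / 2, -(γ : ℂ)] i).re < 0 := by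
    intro i
    fin_cases i <;> simp <;> linarith
  have hsmul : ∀ t : ℝ, t • L₀ = (t : ℂ) • L₀ := fun t => by
    ext ρ a b
    simp [Complex.real_smul]
  -- The norm on matrices is only a local instance, so instance search does not find the
  -- operator-norm ring structure on the superoperators.
  let : NormedRing (Matrix (Fin 3) (Fin 3) ℂ →L[ℂ] Matrix (Fin 3) (Fin 3) ℂ) :=
    ContinuousLinearMap.toNormedRing
  let : NormedAlgebra ℂ (Matrix (Fin 3) (Fin 3) ℂ →L[ℂ] Matrix (Fin 3) (Fin 3) ℂ) :=
    ContinuousLinearMap.toNormedAlgebra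
  simp_rw [hsmul]
  rw [eq_sum_smul_coherenceProj_populationProj hL₀, eq_one_sub_sum_coherenceProj_populationProj hP]
  exact orthogonalIdempotents_coherenceProj_populationProj.tendsto_exp_smul_sum_smul hrates
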